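/- arXiv:1801.02446 — 4 statements merged into one kernel-verified Lean document; each statement's English description precedes it below -/
import Mathlib

section
/- (i) Let ψ ∈ I_0^W and let (μ_t)_{t∈[0,T]} ⊂ 𝒫_V(ℝ^d) solve the Cauchy problem ∂_tμ_t = L_{μ_t}^*μ_t with μ_0 = ν; assume in addition that the defining integral identity of the solution holds with the test function ψ, i.e. ∫ψ dμ_t − ∫ψ dν = ∫₀^t ∫ L_{μ_s}ψ dμ_s ds for all t (this extension is legitimate thanks to the growth bounds on ψ and b). Then ∫ψ dμ_t = ∫ψ dν for all t ∈ [0,T]. (ii) Consequently, if μ ∈ 𝒫_V(ℝ^d) is a stationary solution of L_μ^*μ = 0 and ∫ψ dν ≠ ∫ψ dμ for some ψ ∈ I_0^W, then for any solution (μ_t)_{t≥0} as in (i) one has ‖μ_t − μ‖_W ≥ |∫ψdν − ∫ψdμ| / sup_x(|ψ(x)|/W(x)) > 0 for all t; in particular μ_t does not converge to μ in the norm ‖·‖_W. -/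
open MeasureTheory Real Set Filter Metric
open scoped Topology RealInnerProductSpace NNReal ENNReal

noncomputable section

abbrev Ed (d : ℕ) : Type := EuclideanSpace ℝ (Fin d)

variable {d : ℕ}

/-- Second-order partial derivative `∂_i ∂_j φ (x)`. -/
def hess2 (φ : Ed d → ℝ) (x : Ed d) (i j : Fin d) : ℝ :=
  iteratedFDeriv ℝ 2 φ x ![EuclideanSpace.single i 1, EuclideanSpace.single j 1]

/-- The Kolmogorov operator `L φ = trace (A D²φ) + ⟨B, ∇φ⟩`. -/
def Lop (A : Ed d → Matrix (Fin d) (Fin d) ℝ) (B : Ed d → Ed d)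
    (φ : Ed d → ℝ) (x : Ed d) : ℝ :=
  (∑ i, ∑ j, A x i j * hess2 φ x i j) + ⟪B x, gradient φ x⟫

/-- Membership in `𝒫_V(ℝ^d)`. -/
def memPV (V : Ed d → ℝ) (μ : Measure (Ed d)) : Prop :=
  IsProbabilityMeasure μ ∧ Integrable V μ

/-- `C_0^∞` test functions. -/
def IsTestFun (φ : Ed d → ℝ) : Prop :=
  ContDiff ℝ (⊤ : ℕ∞) φ ∧ HasCompactSupport φ

/-- Weighted total-variation distance `‖W·(μ - ν)‖_{TV}` expressed by duality. -/
def wDist (W : Ed d → ℝ) (μ ν : Measure (Ed d)) : ℝ :=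
  ⨆ f : {f : Ed d → ℝ // Measurable f ∧ ∀ x, |f x| ≤ W x},
    (∫ x, f.1 x ∂μ - ∫ x, f.1 x ∂ν)

/-- Growth bound defining the class of admissible `ψ`. -/
def GrowthW (W ψ : Ed d → ℝ) : Prop :=
  ∃ M : ℝ, ∀ x, |ψ x| + ‖gradient ψ x‖ + ‖iteratedFDeriv ℝ 2 ψ x‖ ≤ M * W x

/-- Stationary solution of `L_μ^*μ = 0`. -/
def IsStationarySol (A : Ed d → Matrix (Fin d) (Fin d) ℝ) (B : Ed d → Ed d)
    (μ : Measure (Ed d)) : Prop :=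
  ∀ φ : Ed d → ℝ, IsTestFun φ → ∫ x, Lop A B φ x ∂μ = 0

/-- Solution of the nonlinear Cauchy problem on `[0,T]`. -/
def IsCauchySolOn (A : Ed d → Matrix (Fin d) (Fin d) ℝ)
    (b : Ed d → Measure (Ed d) → Ed d)
    (ν : Measure (Ed d)) (μ : ℝ → Measure (Ed d)) (T : ℝ) : Prop :=
  μ 0 = ν ∧ ∀ φ : Ed d → ℝ, IsTestFun φ → ∀ t ∈ Set.Icc (0:ℝ) T,
    ∫ x, φ x ∂(μ t) - ∫ x, φ x ∂ν
      = ∫ s in (0:ℝ)..t, ∫ x, Lop A (fun y => b y (μ s)) φ x ∂(μ s)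

/-- The class `I_0^W`. -/
def I0W (A : Ed d → Matrix (Fin d) (Fin d) ℝ)
    (b : Ed d → Measure (Ed d) → Ed d) (V W : Ed d → ℝ) (ψ : Ed d → ℝ) : Prop :=
  ContDiff ℝ 2 ψ ∧ GrowthW W ψ ∧
    ∀ μ : Measure (Ed d), memPV V μ →
      ∫ x, Lop A (fun y => b y μ) ψ x ∂μ = 0

/-- **Proposition 1**: (i) integrals of functions of `I_0^W` are conserved along
solutions of the Cauchy problem; (ii) hence if `∫ψ dν ≠ ∫ψ dμ` for a stationary
solution `μ`, then `μ_t` stays at `‖·‖_W`-distance at least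
`|∫ψdν − ∫ψdμ|/M` from `μ` and does not converge to `μ` in `‖·‖_W`. -/
theorem stmt4_invariant_functions
    (A : Ed d → Matrix (Fin d) (Fin d) ℝ) (K₁ K₂ : ℝ)
    (hK₁ : 0 < K₁) (hK₂ : 0 < K₂)
    (hAsymm : ∀ x, (A x).IsSymm)
    (hAlow : ∀ x (v : Ed d), K₁⁻¹ * ‖v‖ ^ 2 ≤ ∑ i, ∑ j, A x i j * v i * v j)
    (hAup : ∀ x (v : Ed d), ∑ i, ∑ j, A x i j * v i * v j ≤ K₁ * ‖v‖ ^ 2)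
    (hALip : ∀ x y i j, |A x i j - A y i j| ≤ K₂ * ‖x - y‖)
    (V : Ed d → ℝ) (hV : ContDiff ℝ 2 V) (hV1 : ∀ x, 1 ≤ V x)
    (hVinf : Tendsto V (cocompact (Ed d)) atTop)
    (γ : ℝ) (hγ : γ ∈ Set.Ioc (0:ℝ) (1/2))
    (W : Ed d → ℝ) (hW : W = fun x => V x ^ γ)
    (b : Ed d → Measure (Ed d) → Ed d)
    (hbBorel : ∀ μ, Measurable (fun x => b x μ))
    (hbGrow : ∀ μ : Measure (Ed d), memPV V μ →
      ∃ Cb : ℝ, ∀ x, ‖b x μ‖ ≤ Cb * V x ^ (1 - γ))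
    (ψ : Ed d → ℝ) (hψ : I0W A b V W ψ) :
    -- (i)
    (∀ T : ℝ, 0 < T → ∀ ν : Measure (Ed d), memPV V ν →
      ∀ μt : ℝ → Measure (Ed d),
        (∀ t ∈ Set.Icc (0:ℝ) T, memPV V (μt t)) →
        IsCauchySolOn A b ν μt T →
        (∀ t ∈ Set.Icc (0:ℝ) T,
          ∫ x, ψ x ∂(μt t) - ∫ x, ψ x ∂ν
            = ∫ s in (0:ℝ)..t, ∫ x, Lop A (fun y => b y (μt s)) ψ x ∂(μt s)) →
        ∀ t ∈ Set.Icc (0:ℝ) T, ∫ x, ψ x ∂(μt t) = ∫ x, ψ x ∂ν)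
    ∧
    -- (ii)
    (∀ ν : Measure (Ed d), memPV V ν →
      ∀ μt : ℝ → Measure (Ed d),
        (∀ t, 0 ≤ t → memPV V (μt t)) →
        (∀ T : ℝ, 0 < T → IsCauchySolOn A b ν μt T) →
        (∀ t, 0 ≤ t →
          ∫ x, ψ x ∂(μt t) - ∫ x, ψ x ∂ν
            = ∫ s in (0:ℝ)..t, ∫ x, Lop A (fun y => b y (μt s)) ψ x ∂(μt s)) →
      ∀ μ : Measure (Ed d), memPV V μ → IsStationarySol A (fun y => b y μ) μ →
      (∫ x, ψ x ∂ν) ≠ (∫ x, ψ x ∂μ) →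
      ∀ M : ℝ, 0 < M → (∀ x, |ψ x| ≤ M * W x) →
        (∀ t, 0 ≤ t →
          |(∫ x, ψ x ∂ν) - ∫ x, ψ x ∂μ| / M ≤ wDist W (μt t) μ) ∧
        (0 < |(∫ x, ψ x ∂ν) - ∫ x, ψ x ∂μ| / M) ∧
        ¬ Tendsto (fun t => wDist W (μt t) μ) atTop (nhds 0)) := by

  obtain ⟨hψC, hψG, hψL⟩ := hψ
  have key : (∀ T : ℝ, 0 < T → ∀ ν : Measure (Ed d), memPV V ν →
      ∀ μt : ℝ → Measure (Ed d),
        (∀ t ∈ Set.Icc (0:ℝ) T, memPV V (μt t)) →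
        IsCauchySolOn A b ν μt T →
        (∀ t ∈ Set.Icc (0:ℝ) T,
          ∫ x, ψ x ∂(μt t) - ∫ x, ψ x ∂ν
            = ∫ s in (0:ℝ)..t, ∫ x, Lop A (fun y => b y (μt s)) ψ x ∂(μt s)) →
        ∀ t ∈ Set.Icc (0:ℝ) T, ∫ x, ψ x ∂(μt t) = ∫ x, ψ x ∂ν) := by
    intro T hT ν hν μt hmem hsol hext t ht
    have h0 : Set.EqOn (fun s => ∫ x, Lop A (fun y => b y (μt s)) ψ x ∂(μt s))
        (fun _ => (0:ℝ)) (Set.uIcc (0:ℝ) t) := by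
      intro s hs
      rw [Set.uIcc_of_le ht.1] at hs
      exact hψL (μt s) (hmem s ⟨hs.1, hs.2.trans ht.2⟩)
    have h1 := hext t ht
    rw [intervalIntegral.integral_congr h0, intervalIntegral.integral_zero] at h1
    linarith
  refine ⟨key, ?_⟩
  intro ν hν μt hmem hsol hext μ hμ hstat hne M hM hψM
  have cons : ∀ t, 0 ≤ t → ∫ x, ψ x ∂(μt t) = ∫ x, ψ x ∂ν := by
    intro t ht
    rcases eq_or_lt_of_le ht with h | h
    · rw [← h, (hsol 1 one_pos).1]
    · exact key t h ν hν μt (fun s hs => hmem s hs.1) (hsol t h)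
        (fun s hs => hext s hs.1) t ⟨ht, le_refl t⟩
  have hWint : ∀ σ : Measure (Ed d), memPV V σ → Integrable W σ := by
    intro σ hσ
    refine hσ.2.mono ?_ (ae_of_all _ fun x => ?_)
    · rw [hW]
      exact (hV.continuous.rpow_const (fun x => Or.inr hγ.1.le)).aestronglyMeasurable
    · have h1 : (0:ℝ) ≤ V x := le_trans zero_le_one (hV1 x)
      have h2 : W x ≤ V x := by
        rw [hW]
        calc V x ^ γ ≤ V x ^ (1:ℝ) :=
              Real.rpow_le_rpow_of_exponent_le (hV1 x) (by linarith [hγ.2])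
          _ = V x := Real.rpow_one _
      have h3 : (0:ℝ) ≤ W x := by rw [hW]; positivity
      rw [Real.norm_eq_abs, Real.norm_eq_abs, abs_of_nonneg h3, abs_of_nonneg h1]
      exact h2
  have hbdd : ∀ (σ τ : Measure (Ed d)), memPV V σ → memPV V τ →
      BddAbove (Set.range fun f : {f : Ed d → ℝ // Measurable f ∧ ∀ x, |f x| ≤ W x} =>
        ∫ x, f.1 x ∂σ - ∫ x, f.1 x ∂τ) := by
    intro σ τ hσ hτ
    refine ⟨∫ x, W x ∂σ + ∫ x, W x ∂τ, ?_⟩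
    rintro y ⟨⟨f, hfm, hfle⟩, rfl⟩
    have hfint : ∀ ρ : Measure (Ed d), Integrable W ρ → Integrable f ρ := by
      intro ρ hρ
      refine hρ.mono hfm.aestronglyMeasurable (ae_of_all _ fun x => ?_)
      rw [Real.norm_eq_abs]
      exact (hfle x).trans (le_abs_self _)
    have h1 : ∫ x, f x ∂σ ≤ ∫ x, W x ∂σ :=
      integral_mono (hfint σ (hWint σ hσ)) (hWint σ hσ)
        (fun x => (le_abs_self _).trans (hfle x))
    have h2 : -∫ x, f x ∂τ ≤ ∫ x, W x ∂τ := by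
      rw [← integral_neg]
      exact integral_mono ((hfint τ (hWint τ hτ)).neg) (hWint τ hτ)
        (fun x => (neg_le_abs _).trans (hfle x))
    simp only
    linarith
  set D : ℝ := (∫ x, ψ x ∂ν) - ∫ x, ψ x ∂μ with hD
  have hDne : D ≠ 0 := sub_ne_zero.mpr hne
  have hpos : 0 < |D| / M := div_pos (abs_pos.mpr hDne) hM
  have hmain : ∀ t, 0 ≤ t → |D| / M ≤ wDist W (μt t) μ := by
    intro t ht
    set c : ℝ := if 0 ≤ D then 1 else -1 with hc
    have hcabs : |c| = 1 := by rw [hc]; split_ifs <;> simp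
    have hcD : c * D = |D| := by
      rw [hc]; split_ifs with h
      · rw [one_mul, abs_of_nonneg h]
      · rw [abs_of_neg (lt_of_not_ge h)]; ring
    have hψmeas : Measurable ψ := hψC.continuous.measurable
    have hfm : Measurable (fun x => (c / M) * ψ x) := measurable_const.mul hψmeas
    have hfle : ∀ x, |(c / M) * ψ x| ≤ W x := by
      intro x
      rw [abs_mul, abs_div, hcabs, abs_of_pos hM, div_mul_eq_mul_div, one_mul,
        div_le_iff₀ hM]
      linarith [hψM x]
    have hval : (∫ x, (c / M) * ψ x ∂(μt t)) - ∫ x, (c / M) * ψ x ∂μ = |D| / M := by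
      rw [integral_const_mul, integral_const_mul, cons t ht, ← mul_sub, ← hD,
        div_mul_eq_mul_div, hcD]
    calc |D| / M = _ := hval.symm
      _ ≤ wDist W (μt t) μ :=
        le_ciSup (hbdd (μt t) μ (hmem t ht) hμ) ⟨fun x => (c / M) * ψ x, hfm, hfle⟩
  refine ⟨hmain, hpos, fun hten => ?_⟩
  have h1 : ∀ᶠ t in atTop, wDist W (μt t) μ < |D| / M := hten.eventually_lt_const hpos
  obtain ⟨t, hlt, ht0⟩ := (h1.and (eventually_ge_atTop (0:ℝ))).exists
  exact absurd (hmain t ht0) (not_le.mpr hlt)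
end
end

section
/- (i) Let ψ ∈ I_+^W with associated number λ = λ(ψ) > 0, and let (μ_t)_{t∈[0,T]} ⊂ 𝒫_V(ℝ^d) solve the Cauchy problem ∂_tμ_t = L_{μ_t}^*μ_t with μ_0 = ν, with sup_{t∈[0,T]}∫V dμ_t < ∞ and with the defining integral identity holding also for the test function ψ, i.e. ∫ψ dμ_t − ∫ψ dν = ∫₀^t ∫ L_{μ_s}ψ dμ_s ds. Then ∫ψ dμ_t = e^{λ t} ∫ψ dν for all t ∈ [0,T]. (ii) If μ ∈ 𝒫_V(ℝ^d) is a stationary solution of L_μ^*μ = 0 whose stationary identity extends to ψ ∈ I_+^W (i.e. ∫L_μψ dμ = 0), then ∫ψ dμ = 0. (iii) If ∫ψ dν ≠ 0 for some ψ ∈ I_+^W, then for solutions (μ_t)_{t≥0} as in (i) and any stationary solution μ as in (ii), ‖μ_t − μ‖_W ≥ e^{λ t}|∫ψdν| / sup_x(|ψ(x)|/W(x)), so μ_t does not converge to μ in the norm ‖·‖_W. -/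
open MeasureTheory Real Set Filter Metric
open scoped Topology RealInnerProductSpace NNReal ENNReal

noncomputable section

variable {d : ℕ}

/-!
Along a solution, `f t = ∫ ψ dμ_t` satisfies the linear integral equation
`f t - f 0 = λ ∫₀ᵗ f`, because `∫ L_{μ_s} ψ dμ_s = λ ∫ ψ dμ_s` for every `μ_s ∈ 𝒫_V`; hence
`f t = e^{λ t} f 0`. For a stationary `μ` the same identity gives `λ ∫ ψ dμ = 0`. Testing the
dual formula for `‖μ_t - μ‖_W` against `ψ / M` then bounds the distance below by
`e^{λ t} |∫ ψ dν| / M`, which stays away from `0`.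
-/

theorem eq_exp_mul_of_eq_add_integral {f : ℝ → ℝ} {c a : ℝ}
    (hint : IntervalIntegrable (fun s => c * f s) volume 0 a)
    (h : ∀ t ∈ Icc 0 a, f t = f 0 + ∫ s in 0..t, c * f s) :
    ∀ t ∈ Icc 0 a, f t = exp (c * t) * f 0 := by
  intro t ht
  have ha : 0 ≤ a := ht.1.trans ht.2
  have hcont : ContinuousOn f (Icc 0 a) := by
    have := intervalIntegral.continuousOn_primitive_interval' hint left_mem_uIcc
    rw [uIcc_of_le ha] at this
    exact (continuousOn_const.add this).congr h
  have hderiv : ∀ u ∈ Ico 0 a, HasDerivWithinAt f (c * f u) (Ici u) u := by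
    intro u hu
    have : Fact (u ∈ Icc 0 a) := ⟨Ico_subset_Icc_self hu⟩
    have hcf : ContinuousOn (fun s => c * f s) (Icc 0 a) := continuousOn_const.mul hcont
    have hFTC : HasDerivWithinAt (fun v => ∫ s in 0..v, c * f s) (c * f u) (Icc 0 a) u :=
      intervalIntegral.integral_hasDerivWithinAt_right
        (hint.mono_set (uIcc_subset_uIcc_left (by simpa [uIcc_of_le ha] using this.out)))
        (hcf.stronglyMeasurableAtFilter_nhdsWithin measurableSet_Icc u) (hcf u this.out)
    exact ((hFTC.const_add (f 0)).congr h (h u this.out)).mono_of_mem_nhdsWithin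
      (Icc_mem_nhdsGE_of_mem hu)
  have hexp : ∀ u ∈ Ico 0 a,
      HasDerivWithinAt (fun v => exp (c * v) * f 0) (c * (exp (c * u) * f 0)) (Ici u) u := by
    intro u _
    have := ((hasDerivAt_id u).const_mul c).exp.mul_const (f 0)
    exact this.hasDerivWithinAt.congr_deriv (by simp; ring)
  have hlip : LipschitzWith ‖c‖₊ (fun x : ℝ => c * x) := lipschitzWith_smul c
  exact ODE_solution_unique_of_mem_Icc_right (fun _ _ => hlip.lipschitzOnWith (s := univ))
    hcont hderiv (fun _ _ => mem_univ _) (by fun_prop) hexp (fun _ _ => mem_univ _) (by simp) ht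

/-- Where `∫₀ᵗ c f` is undefined it takes the junk value `0`; the set of such `t` is an up-set
of `[0, T]` on which `f` is constant, so `c f` is integrable on all of `[0, T]` anyway. -/
theorem eq_exp_mul_of_sub_eq_integral {f : ℝ → ℝ} {c T : ℝ}
    (h : ∀ t ∈ Icc 0 T, f t - f 0 = ∫ s in 0..t, c * f s) :
    ∀ t ∈ Icc 0 T, f t = exp (c * t) * f 0 := by
  intro t ht
  have hT : 0 ≤ T := ht.1.trans ht.2
  set S := {t ∈ Icc 0 T | IntervalIntegrable (fun s => c * f s) volume 0 t}
  have hexp : ∀ t₁ ∈ S, ∀ t ∈ Icc 0 t₁, f t = exp (c * t) * f 0 := fun t₁ ht₁ =>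
    eq_exp_mul_of_eq_add_integral ht₁.2 fun t ht => by
      linarith [h t ⟨ht.1, ht.2.trans ht₁.1.2⟩]
  suffices hTS : T ∈ S from hexp T hTS t ht
  have hjunk : ∀ t ∈ Icc 0 T, t ∉ S → f t = f 0 := fun t ht htS => by
    have := h t ht
    rw [intervalIntegral.integral_undef fun hi => htS ⟨ht, hi⟩] at this
    linarith
  have h0S : (0 : ℝ) ∈ S := ⟨⟨le_rfl, hT⟩, IntervalIntegrable.refl⟩
  have hSbdd : BddAbove S := ⟨T, fun t ht => ht.1.2⟩
  set τ := sSup S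
  have hτ0 : 0 ≤ τ := le_csSup hSbdd h0S
  have hτT : τ ≤ T := csSup_le ⟨0, h0S⟩ fun t ht => ht.1.2
  have hbelow : EqOn (fun s => c * (exp (c * s) * f 0)) (fun s => c * f s) (Ioo 0 τ) :=
    fun s hs => by
      obtain ⟨t₁, ht₁S, hst₁⟩ := exists_lt_of_lt_csSup ⟨0, h0S⟩ hs.2
      simp only [hexp t₁ ht₁S s ⟨hs.1.le, hst₁.le⟩]
  have habove : EqOn (fun _ => c * f 0) (fun s => c * f s) (Ioc τ T) := fun s hs => by
    simp only [hjunk s ⟨hτ0.trans hs.1.le, hs.2⟩ (notMem_of_csSup_lt hs.1 hSbdd)]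
  have hint_below : IntervalIntegrable (fun s => c * f s) volume 0 τ :=
    (intervalIntegrable_iff_integrableOn_Ioo_of_le hτ0).2 <|
      ((by fun_prop : Continuous fun s => c * (exp (c * s) * f 0)).integrableOn_Icc.mono_set
        Ioo_subset_Icc_self).congr_fun hbelow measurableSet_Ioo
  have hint_above : IntervalIntegrable (fun s => c * f s) volume τ T :=
    (intervalIntegrable_iff_integrableOn_Ioc_of_le hτT).2 <|
      (integrableOn_const measure_Ioc_lt_top.ne).congr_fun habove measurableSet_Ioc
  exact ⟨⟨hT, le_rfl⟩, hint_below.trans hint_above⟩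

theorem MeasureTheory.Integrable.rpow_of_one_le {α : Type*} [MeasurableSpace α]
    {μ : Measure α} {V : α → ℝ} (hV : Integrable V μ) (hV1 : ∀ x, 1 ≤ V x) {γ : ℝ}
    (hγ : γ ≤ 1) : Integrable (fun x => V x ^ γ) μ := by
  refine hV.mono' (hV.aemeasurable.pow_const γ).aestronglyMeasurable (ae_of_all _ fun x => ?_)
  rw [norm_eq_abs, abs_of_nonneg (rpow_nonneg (zero_le_one.trans (hV1 x)) γ)]
  simpa using rpow_le_rpow_of_exponent_le (hV1 x) hγ

theorem abs_integral_sub_integral_le_wDist {W : Ed d → ℝ} {μ ν : Measure (Ed d)}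
    (hμ : Integrable W μ) (hν : Integrable W ν) {g : Ed d → ℝ} (hg : Measurable g)
    (hgW : ∀ x, |g x| ≤ W x) :
    |∫ x, g x ∂μ - ∫ x, g x ∂ν| ≤ wDist W μ ν := by
  have hbdd : BddAbove (range fun f : {f : Ed d → ℝ // Measurable f ∧ ∀ x, |f x| ≤ W x} =>
      ∫ x, f.1 x ∂μ - ∫ x, f.1 x ∂ν) := by
    refine ⟨(∫ x, W x ∂μ) + ∫ x, W x ∂ν, ?_⟩
    rintro _ ⟨f, rfl⟩
    have hfμ := norm_integral_le_of_norm_le (f := f.1) hμ (ae_of_all _ f.2.2)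
    have hfν := norm_integral_le_of_norm_le (f := f.1) hν (ae_of_all _ f.2.2)
    rw [norm_eq_abs, abs_le] at hfμ hfν
    linarith [hfμ.2, hfν.1]
  rw [wDist, abs_le]
  constructor
  · have := le_ciSup hbdd ⟨fun x => -g x, hg.neg, fun x => (abs_neg (g x)).trans_le (hgW x)⟩
    simp only [integral_neg] at this
    linarith
  · exact le_ciSup hbdd ⟨g, hg, hgW⟩

theorem integral_eq_exp_mul_of_integral_Lop_eq {A : Ed d → Matrix (Fin d) (Fin d) ℝ}
    {b : Ed d → Measure (Ed d) → Ed d} {V ψ : Ed d → ℝ} {lam T : ℝ} {ν : Measure (Ed d)}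
    {μt : ℝ → Measure (Ed d)}
    (hψeq : ∀ μ : Measure (Ed d), memPV V μ →
      ∫ x, Lop A (fun y => b y μ) ψ x ∂μ = lam * ∫ x, ψ x ∂μ)
    (h0 : μt 0 = ν) (hmem : ∀ t ∈ Icc 0 T, memPV V (μt t))
    (hψid : ∀ t ∈ Icc 0 T, ∫ x, ψ x ∂(μt t) - ∫ x, ψ x ∂ν
      = ∫ s in 0..t, ∫ x, Lop A (fun y => b y (μt s)) ψ x ∂(μt s)) :
    ∀ t ∈ Icc 0 T, ∫ x, ψ x ∂(μt t) = exp (lam * t) * ∫ x, ψ x ∂ν := by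
  subst h0
  refine eq_exp_mul_of_sub_eq_integral fun t ht => (hψid t ht).trans ?_
  refine intervalIntegral.integral_congr fun s hs => ?_
  rw [uIcc_of_le ht.1] at hs
  exact hψeq (μt s) (hmem s ⟨hs.1, hs.2.trans ht.2⟩)

theorem stmt6_subinvariant_functions_general
    (A : Ed d → Matrix (Fin d) (Fin d) ℝ)
    (V : Ed d → ℝ) (hV1 : ∀ x, 1 ≤ V x)
    (γ : ℝ) (hγ : γ ∈ Set.Ioc (0:ℝ) (1/2))
    (W : Ed d → ℝ) (hW : W = fun x => V x ^ γ)
    (b : Ed d → Measure (Ed d) → Ed d)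
    -- `ψ ∈ I_+^W` with associated number `lam = λ(ψ) > 0`
    (ψ : Ed d → ℝ) (hψC2 : ContDiff ℝ 2 ψ)
    (lam : ℝ) (hlam : 0 < lam)
    (hψeq : ∀ μ : Measure (Ed d), memPV V μ →
      ∫ x, Lop A (fun y => b y μ) ψ x ∂μ = lam * ∫ x, ψ x ∂μ) :
    -- (i)
    (∀ T : ℝ, 0 < T → ∀ ν : Measure (Ed d), memPV V ν →
      ∀ μt : ℝ → Measure (Ed d),
        (∀ t ∈ Set.Icc (0:ℝ) T, memPV V (μt t)) →
        (∃ M : ℝ, ∀ t ∈ Set.Icc (0:ℝ) T, (∫ x, V x ∂(μt t)) ≤ M) →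
        IsCauchySolOn A b ν μt T →
        (∀ t ∈ Set.Icc (0:ℝ) T,
          ∫ x, ψ x ∂(μt t) - ∫ x, ψ x ∂ν
            = ∫ s in (0:ℝ)..t, ∫ x, Lop A (fun y => b y (μt s)) ψ x ∂(μt s)) →
        ∀ t ∈ Set.Icc (0:ℝ) T,
          ∫ x, ψ x ∂(μt t) = Real.exp (lam * t) * ∫ x, ψ x ∂ν)
    ∧
    -- (ii)
    (∀ μ : Measure (Ed d), memPV V μ → IsStationarySol A (fun y => b y μ) μ →
      (∫ x, Lop A (fun y => b y μ) ψ x ∂μ = 0) →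
      ∫ x, ψ x ∂μ = 0)
    ∧
    -- (iii)
    (∀ ν : Measure (Ed d), memPV V ν →
      ∀ μt : ℝ → Measure (Ed d),
        (∀ t, 0 ≤ t → memPV V (μt t)) →
        (∀ T : ℝ, 0 < T →
          (∃ M : ℝ, ∀ t ∈ Set.Icc (0:ℝ) T, (∫ x, V x ∂(μt t)) ≤ M) ∧
          IsCauchySolOn A b ν μt T) →
        (∀ t, 0 ≤ t →
          ∫ x, ψ x ∂(μt t) - ∫ x, ψ x ∂ν
            = ∫ s in (0:ℝ)..t, ∫ x, Lop A (fun y => b y (μt s)) ψ x ∂(μt s)) →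
      ∀ μ : Measure (Ed d), memPV V μ → IsStationarySol A (fun y => b y μ) μ →
        (∫ x, Lop A (fun y => b y μ) ψ x ∂μ = 0) →
      (∫ x, ψ x ∂ν) ≠ 0 →
      ∀ M : ℝ, 0 < M → (∀ x, |ψ x| ≤ M * W x) →
        (∀ t, 0 ≤ t →
          Real.exp (lam * t) * |∫ x, ψ x ∂ν| / M ≤ wDist W (μt t) μ) ∧
        ¬ Tendsto (fun t => wDist W (μt t) μ) atTop (nhds 0)) := by
  have hW_int : ∀ μ, memPV V μ → Integrable W μ := fun μ hμ =>
    hW ▸ hμ.2.rpow_of_one_le hV1 (hγ.2.trans (by norm_num))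
  have hstat : ∀ μ, memPV V μ → ∫ x, Lop A (fun y => b y μ) ψ x ∂μ = 0 → ∫ x, ψ x ∂μ = 0 :=
    fun μ hμ h0 => (mul_eq_zero.1 ((hψeq μ hμ).symm.trans h0)).resolve_left hlam.ne'
  refine ⟨fun T _ ν _ μt hmem _ hsol hψid =>
    integral_eq_exp_mul_of_integral_Lop_eq hψeq hsol.1 hmem hψid, fun μ hμ _ => hstat μ hμ, ?_⟩
  intro ν _ μt hmem hsol hψid μ hμ _ hLμ hI M hM hψM
  have hgrowth : ∀ t, 0 ≤ t → ∫ x, ψ x ∂(μt t) = exp (lam * t) * ∫ x, ψ x ∂ν := fun t ht =>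
    integral_eq_exp_mul_of_integral_Lop_eq hψeq (hsol (t + 1) (by linarith)).2.1
      (fun s hs => hmem s hs.1) (fun s hs => hψid s hs.1) t ⟨ht, by linarith⟩
  have hlow : ∀ t, 0 ≤ t → exp (lam * t) * |∫ x, ψ x ∂ν| / M ≤ wDist W (μt t) μ := by
    intro t ht
    calc exp (lam * t) * |∫ x, ψ x ∂ν| / M
        = |∫ x, ψ x / M ∂(μt t) - ∫ x, ψ x / M ∂μ| := by
          rw [integral_div, integral_div, hgrowth t ht, hstat μ hμ hLμ, zero_div, sub_zero,
            abs_div, abs_mul, abs_of_pos (exp_pos _), abs_of_pos hM]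
      _ ≤ wDist W (μt t) μ :=
          abs_integral_sub_integral_le_wDist (hW_int _ (hmem t ht)) (hW_int μ hμ)
            (hψC2.continuous.measurable.div_const M) fun x => by
              rw [abs_div, abs_of_pos hM, div_le_iff₀ hM, mul_comm]
              exact hψM x
  refine ⟨hlow, fun hlim => ?_⟩
  have hlim_ge : |∫ x, ψ x ∂ν| / M ≤ 0 := ge_of_tendsto hlim <|
    eventually_atTop.2 ⟨0, fun t ht => (div_le_div_of_nonneg_right
      (le_mul_of_one_le_left (abs_nonneg _) (one_le_exp (by positivity))) hM.le).trans
        (hlow t ht)⟩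
  exact hlim_ge.not_gt (div_pos (abs_pos.2 hI) hM)

/-- **Proposition 3** (behaviour of `I_+^W` functionals): (i) exponential growth of
`∫ψ dμ_t` along solutions; (ii) vanishing of `∫ψ dμ` for stationary `μ`; (iii) the
resulting obstruction to convergence in `‖·‖_W`. -/
theorem stmt6_subinvariant_functions
    (A : Ed d → Matrix (Fin d) (Fin d) ℝ) (K₁ K₂ : ℝ)
    (hK₁ : 0 < K₁) (hK₂ : 0 < K₂)
    (hAsymm : ∀ x, (A x).IsSymm)
    (hAlow : ∀ x (v : Ed d), K₁⁻¹ * ‖v‖ ^ 2 ≤ ∑ i, ∑ j, A x i j * v i * v j)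
    (hAup : ∀ x (v : Ed d), ∑ i, ∑ j, A x i j * v i * v j ≤ K₁ * ‖v‖ ^ 2)
    (hALip : ∀ x y i j, |A x i j - A y i j| ≤ K₂ * ‖x - y‖)
    (V : Ed d → ℝ) (hV : ContDiff ℝ 2 V) (hV1 : ∀ x, 1 ≤ V x)
    (hVinf : Tendsto V (cocompact (Ed d)) atTop)
    (γ : ℝ) (hγ : γ ∈ Set.Ioc (0:ℝ) (1/2))
    (W : Ed d → ℝ) (hW : W = fun x => V x ^ γ)
    (b : Ed d → Measure (Ed d) → Ed d)
    (hbBorel : ∀ μ, Measurable (fun x => b x μ))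
    (hbGrow : ∀ μ : Measure (Ed d), memPV V μ →
      ∃ Cb : ℝ, ∀ x, ‖b x μ‖ ≤ Cb * V x ^ (1 - γ))
    -- `ψ ∈ I_+^W` with associated number `lam = λ(ψ) > 0`
    (ψ : Ed d → ℝ) (hψC2 : ContDiff ℝ 2 ψ) (hψgrow : GrowthW W ψ)
    (lam : ℝ) (hlam : 0 < lam)
    (hψeq : ∀ μ : Measure (Ed d), memPV V μ →
      ∫ x, Lop A (fun y => b y μ) ψ x ∂μ = lam * ∫ x, ψ x ∂μ) :
    -- (i)
    (∀ T : ℝ, 0 < T → ∀ ν : Measure (Ed d), memPV V ν →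
      ∀ μt : ℝ → Measure (Ed d),
        (∀ t ∈ Set.Icc (0:ℝ) T, memPV V (μt t)) →
        (∃ M : ℝ, ∀ t ∈ Set.Icc (0:ℝ) T, (∫ x, V x ∂(μt t)) ≤ M) →
        IsCauchySolOn A b ν μt T →
        (∀ t ∈ Set.Icc (0:ℝ) T,
          ∫ x, ψ x ∂(μt t) - ∫ x, ψ x ∂ν
            = ∫ s in (0:ℝ)..t, ∫ x, Lop A (fun y => b y (μt s)) ψ x ∂(μt s)) →
        ∀ t ∈ Set.Icc (0:ℝ) T,
          ∫ x, ψ x ∂(μt t) = Real.exp (lam * t) * ∫ x, ψ x ∂ν)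
    ∧
    -- (ii)
    (∀ μ : Measure (Ed d), memPV V μ → IsStationarySol A (fun y => b y μ) μ →
      (∫ x, Lop A (fun y => b y μ) ψ x ∂μ = 0) →
      ∫ x, ψ x ∂μ = 0)
    ∧
    -- (iii)
    (∀ ν : Measure (Ed d), memPV V ν →
      ∀ μt : ℝ → Measure (Ed d),
        (∀ t, 0 ≤ t → memPV V (μt t)) →
        (∀ T : ℝ, 0 < T →
          (∃ M : ℝ, ∀ t ∈ Set.Icc (0:ℝ) T, (∫ x, V x ∂(μt t)) ≤ M) ∧
          IsCauchySolOn A b ν μt T) →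
        (∀ t, 0 ≤ t →
          ∫ x, ψ x ∂(μt t) - ∫ x, ψ x ∂ν
            = ∫ s in (0:ℝ)..t, ∫ x, Lop A (fun y => b y (μt s)) ψ x ∂(μt s)) →
      ∀ μ : Measure (Ed d), memPV V μ → IsStationarySol A (fun y => b y μ) μ →
        (∫ x, Lop A (fun y => b y μ) ψ x ∂μ = 0) →
      (∫ x, ψ x ∂ν) ≠ 0 →
      ∀ M : ℝ, 0 < M → (∀ x, |ψ x| ≤ M * W x) →
        (∀ t, 0 ≤ t →
          Real.exp (lam * t) * |∫ x, ψ x ∂ν| / M ≤ wDist W (μt t) μ) ∧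
        ¬ Tendsto (fun t => wDist W (μt t) μ) atTop (nhds 0)) :=
  stmt6_subinvariant_functions_general A V hV1 γ hγ W hW b ψ hψC2 lam hlam hψeq
end
end

section
/- Let ψ ∈ I_0^W, and suppose h : ℝ^d → ℝ is continuous with sup_x |h(x)|/V(x) < ∞ and that for every σ ∈ 𝒫_V(ℝ^d) there exist numbers C₁(σ) ≠ 0 and C₂(σ) with L_σψ(x) = C₁(σ)h(x) + C₂(σ) for all x ∈ ℝ^d. Fix σ ∈ 𝒫_V(ℝ^d) and let μ ∈ 𝒫_V(ℝ^d) be a solution of the linear stationary equation L_σ^*μ = 0 whose stationary identity extends to ψ, i.e. ∫ L_σψ dμ = 0. Then ∫ h dμ = ∫ h dσ. The same conclusion holds if instead ψ ∈ I_+^W and ∫ψ dσ = 0. -/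
open MeasureTheory Real Set Filter Metric
open scoped Topology RealInnerProductSpace NNReal ENNReal

noncomputable section

variable {d : ℕ}

/-- The class `I_+^W`. -/
def IplusW (A : Ed d → Matrix (Fin d) (Fin d) ℝ)
    (b : Ed d → Measure (Ed d) → Ed d) (V W : Ed d → ℝ) (ψ : Ed d → ℝ) : Prop :=
  ContDiff ℝ 2 ψ ∧ GrowthW W ψ ∧
    ∃ lam > (0:ℝ), ∀ μ : Measure (Ed d), memPV V μ →
      ∫ x, Lop A (fun y => b y μ) ψ x ∂μ = lam * ∫ x, ψ x ∂μ

/-- **Proposition 5**: if `L_σψ = C₁(σ)h + C₂(σ)` with `C₁(σ) ≠ 0` and `ψ ∈ I_0^W`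
(or `ψ ∈ I_+^W` with `∫ψ dσ = 0`), then any solution `μ` of `L_σ^*μ = 0` satisfies
`∫h dμ = ∫h dσ`. -/
theorem stmt8_stationary_conserves_h
    (A : Ed d → Matrix (Fin d) (Fin d) ℝ) (K₁ K₂ : ℝ)
    (hK₁ : 0 < K₁) (hK₂ : 0 < K₂)
    (hAsymm : ∀ x, (A x).IsSymm)
    (hAlow : ∀ x (v : Ed d), K₁⁻¹ * ‖v‖ ^ 2 ≤ ∑ i, ∑ j, A x i j * v i * v j)
    (hAup : ∀ x (v : Ed d), ∑ i, ∑ j, A x i j * v i * v j ≤ K₁ * ‖v‖ ^ 2)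
    (hALip : ∀ x y i j, |A x i j - A y i j| ≤ K₂ * ‖x - y‖)
    (V : Ed d → ℝ) (hV : ContDiff ℝ 2 V) (hV1 : ∀ x, 1 ≤ V x)
    (hVinf : Tendsto V (cocompact (Ed d)) atTop)
    (γ : ℝ) (hγ : γ ∈ Set.Ioc (0:ℝ) (1/2))
    (W : Ed d → ℝ) (hW : W = fun x => V x ^ γ)
    (b : Ed d → Measure (Ed d) → Ed d)
    (hbBorel : ∀ μ, Measurable (fun x => b x μ))
    (hbGrow : ∀ μ : Measure (Ed d), memPV V μ →
      ∃ Cb : ℝ, ∀ x, ‖b x μ‖ ≤ Cb * V x ^ (1 - γ))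
    (ψ : Ed d → ℝ)
    (h : Ed d → ℝ) (hhCont : Continuous h)
    (hhGrow : ∃ M : ℝ, ∀ x, |h x| ≤ M * V x)
    (hRep : ∀ σ : Measure (Ed d), memPV V σ →
      ∃ C₁ C₂ : ℝ, C₁ ≠ 0 ∧
        ∀ x, Lop A (fun y => b y σ) ψ x = C₁ * h x + C₂)
    (σ : Measure (Ed d)) (hσ : memPV V σ)
    (μ : Measure (Ed d)) (hμ : memPV V μ)
    (hμstat : IsStationarySol A (fun y => b y σ) μ)
    (hμext : ∫ x, Lop A (fun y => b y σ) ψ x ∂μ = 0) :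
    (I0W A b V W ψ → ∫ x, h x ∂μ = ∫ x, h x ∂σ)
    ∧
    (IplusW A b V W ψ → (∫ x, ψ x ∂σ) = 0 → ∫ x, h x ∂μ = ∫ x, h x ∂σ) := by
  obtain ⟨C₁, C₂, hC₁, hrep⟩ := hRep σ hσ
  obtain ⟨M, hM⟩ := hhGrow
  have hInt : ∀ ν : Measure (Ed d), memPV V ν → Integrable h ν := by
    intro ν ⟨hp, hIV⟩
    exact (hIV.const_mul M).mono' hhCont.aestronglyMeasurable
      (ae_of_all _ fun x => by simpa [Real.norm_eq_abs] using hM x)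
  have hIntμ := hInt μ hμ
  have hIntσ := hInt σ hσ
  have hPμ : IsProbabilityMeasure μ := hμ.1
  have hPσ : IsProbabilityMeasure σ := hσ.1
  have keyμ : C₁ * ∫ x, h x ∂μ + C₂ = 0 := by
    have : ∫ x, Lop A (fun y => b y σ) ψ x ∂μ = C₁ * ∫ x, h x ∂μ + C₂ := by
      calc ∫ x, Lop A (fun y => b y σ) ψ x ∂μ = ∫ x, (C₁ * h x + C₂) ∂μ := by
            exact integral_congr_ae (ae_of_all _ hrep)
        _ = C₁ * ∫ x, h x ∂μ + C₂ := by
            rw [integral_add (hIntμ.const_mul C₁) (integrable_const C₂),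
              integral_const_mul, integral_const]
            simp
    linarith [hμext ▸ this.symm, this]
  have keyσ : ∀ hσint : ∫ x, Lop A (fun y => b y σ) ψ x ∂σ = 0,
      C₁ * ∫ x, h x ∂σ + C₂ = 0 := by
    intro hσint
    have : ∫ x, Lop A (fun y => b y σ) ψ x ∂σ = C₁ * ∫ x, h x ∂σ + C₂ := by
      calc ∫ x, Lop A (fun y => b y σ) ψ x ∂σ = ∫ x, (C₁ * h x + C₂) ∂σ := by
            exact integral_congr_ae (ae_of_all _ hrep)
        _ = C₁ * ∫ x, h x ∂σ + C₂ := by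
            rw [integral_add (hIntσ.const_mul C₁) (integrable_const C₂),
              integral_const_mul, integral_const]
            simp
    linarith [hσint ▸ this.symm, this]
  constructor
  · intro hI0
    have hσ0 := hI0.2.2 σ hσ
    have := keyσ hσ0
    exact mul_left_cancel₀ hC₁ (by linarith)
  · intro hIp hψσ
    obtain ⟨lam, hlam, hlamEq⟩ := hIp.2.2
    have hσ0 : ∫ x, Lop A (fun y => b y σ) ψ x ∂σ = 0 := by
      rw [hlamEq σ hσ, hψσ, mul_zero]
    have := keyσ hσ0
    exact mul_left_cancel₀ hC₁ (by linarith)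
end
end

section
/- Let d = 1, A = 1, ε > 1 and b(x,μ) = −x + εB(μ), where B(μ) = ∫x μ(dx). Let (μ_t)_{t≥0} be Borel probability measures on ℝ with finite first moments solving the Cauchy problem ∂_tμ_t = L_{μ_t}^*μ_t with initial condition ν, and suppose B(μ_t) = B(ν)e^{(ε−1)t} for all t ≥ 0, with B(ν) ≠ 0. Then (μ_t) does not converge weakly (in the topology of weak convergence of probability measures) to any Borel probability measure on ℝ as t → +∞; in particular, it does not converge weakly to the standard Gaussian measure, which is the stationary solution. -/
open MeasureTheory Real Set Filter
open scoped Topology NNReal ENNReal BoundedContinuousFunction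

noncomputable section

/-- The one-dimensional Kolmogorov operator `L φ = φ'' + b φ'`. -/
def L1op (bb : ℝ → ℝ) (φ : ℝ → ℝ) (x : ℝ) : ℝ :=
  deriv (deriv φ) x + bb x * deriv φ x

/-- The mean `B(μ) = ∫ x μ(dx)`. -/
def Bmean (μ : Measure ℝ) : ℝ := ∫ x, x ∂μ

/-- `C_0^∞` test functions on ℝ. -/
def IsTestFun1 (φ : ℝ → ℝ) : Prop :=
  ContDiff ℝ (⊤ : ℕ∞) φ ∧ HasCompactSupport φ

/-!
If `μ_t → μ` weakly, then `∫ φ' dμ_t → ∫ φ' dμ` for every test function `φ`. Along the solution,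
`d/dt ∫ φ dμ_t = ∫ (φ'' - x φ') dμ_t + ε B(ν) e^{(ε-1)t} ∫ φ' dμ_t`, whose first term is bounded.
If `ε B(ν) ∫ φ' dμ > 0` the right-hand side tends to `+∞`, so the bounded quantity `∫ φ dμ_t`
would tend to `+∞`; replacing `φ` by `-φ` rules out the other sign. Hence `∫ φ' dμ = 0` for all
test functions: `y ↦ ∫ φ (x - y) dμ(x)` is constant, and letting `y → ∞` gives `∫ φ dμ = 0`,
which is impossible for a probability measure.
-/

theorem measurable_setIntegral_Ioc (f : ℝ → ℝ) (a : ℝ) :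
    Measurable fun t => ∫ s in Ioc a t, f s := by
  set A := {t | IntegrableOn f (Ioc a t)}
  have hA : MeasurableSet A :=
    OrdConnected.measurableSet ⟨fun _ _ t ht _ hu => ht.mono_set (Ioc_subset_Ioc_right hu.2)⟩
  have hmono (g : ℝ → ℝ) : Monotone fun t => ∫⁻ s in Ioc a t, ENNReal.ofReal (g s) :=
    fun _ _ h => lintegral_mono_set (Ioc_subset_Ioc_right h)
  -- Off `A` the integral is the junk value `0`; on `A` it is a difference of monotone functions.
  have hind : (fun t => ∫ s in Ioc a t, f s) = A.indicator fun t =>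
      (∫⁻ s in Ioc a t, ENNReal.ofReal (f s)).toReal
        - (∫⁻ s in Ioc a t, ENNReal.ofReal (-f s)).toReal := by
    ext t
    by_cases ht : t ∈ A
    · rw [indicator_of_mem ht]
      exact integral_eq_lintegral_pos_part_sub_lintegral_neg_part ht
    · rw [indicator_of_notMem ht]
      exact integral_undef ht
  rw [hind]
  exact ((hmono f).measurable.ennreal_toReal.sub
    (hmono (-f)).measurable.ennreal_toReal).indicator hA

theorem tendsto_atTop_of_sub_eq_intervalIntegral {f g : ℝ → ℝ} {a c : ℝ}
    (hfg : ∀ t, a ≤ t → f t - c = ∫ s in a..t, g s)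
    (hg : ∀ t, a ≤ t → IntegrableOn g (Ioc a t)) (hg_top : Tendsto g atTop atTop) :
    Tendsto f atTop atTop := by
  obtain ⟨T, hT⟩ := eventually_atTop.mp
    ((hg_top.eventually_ge_atTop 1).and (eventually_ge_atTop a))
  have haT : a ≤ T := (hT T le_rfl).2
  have hint (t : ℝ) (ht : T ≤ t) : IntervalIntegrable g volume a t :=
    (intervalIntegrable_iff_integrableOn_Ioc_of_le (haT.trans ht)).2 (hg t (haT.trans ht))
  have hlow (t : ℝ) (ht : T ≤ t) : f T - T + t ≤ f t := by
    have hTt := (hint T le_rfl).symm.trans (hint t ht)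
    have hsplit := intervalIntegral.integral_add_adjacent_intervals (hint T le_rfl) hTt
    have hmono : ∫ _ in T..t, (1 : ℝ) ≤ ∫ s in T..t, g s :=
      intervalIntegral.integral_mono_on ht intervalIntegrable_const hTt fun s hs => (hT s hs.1).1
    simp only [intervalIntegral.integral_const, smul_eq_mul, mul_one] at hmono
    linarith [hfg t (haT.trans ht), hfg T haT]
  exact tendsto_atTop_mono' _ (eventually_atTop.2 ⟨T, hlow⟩)
    (tendsto_atTop_add_const_left _ _ tendsto_id)

namespace IsTestFun1

variable {φ : ℝ → ℝ}

protected theorem continuous (hφ : IsTestFun1 φ) : Continuous φ := hφ.1.continuous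

protected theorem deriv (hφ : IsTestFun1 φ) : IsTestFun1 (deriv φ) :=
  ⟨(contDiff_infty_iff_deriv.mp hφ.1).2, hφ.2.deriv⟩

protected theorem neg (hφ : IsTestFun1 φ) : IsTestFun1 (-φ) := ⟨hφ.1.neg, hφ.2.neg⟩

theorem comp_sub_const (hφ : IsTestFun1 φ) (a : ℝ) : IsTestFun1 (fun x => φ (x - a)) :=
  ⟨hφ.1.comp (contDiff_id.sub contDiff_const), hφ.2.comp_homeomorph (Homeomorph.subRight a)⟩

protected theorem L1op {bb : ℝ → ℝ} (hb : ContDiff ℝ (⊤ : ℕ∞) bb) (hφ : IsTestFun1 φ) :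
    IsTestFun1 (L1op bb φ) :=
  ⟨hφ.deriv.deriv.1.add (hb.mul hφ.deriv.1), hφ.deriv.deriv.2.add hφ.deriv.2.mul_left⟩

def toBCF (hφ : IsTestFun1 φ) : ℝ →ᵇ ℝ :=
  ofCompactSupport φ hφ.continuous hφ.2

@[simp]
theorem coe_toBCF (hφ : IsTestFun1 φ) : ⇑hφ.toBCF = φ := rfl

protected theorem integrable (hφ : IsTestFun1 φ) (μ : Measure ℝ) [IsFiniteMeasure μ] :
    Integrable φ μ :=
  hφ.toBCF.integrable μ

theorem abs_integral_le (hφ : IsTestFun1 φ) (μ : Measure ℝ) [IsProbabilityMeasure μ] :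
    |∫ x, φ x ∂μ| ≤ ‖hφ.toBCF‖ :=
  hφ.toBCF.norm_integral_le_norm μ

end IsTestFun1

theorem L1op_add_const (bb φ : ℝ → ℝ) (β x : ℝ) :
    L1op (fun y => bb y + β) φ x = L1op bb φ x + β * deriv φ x := by
  simp only [L1op]; ring

theorem integral_L1op_add_const {bb φ : ℝ → ℝ} (hb : ContDiff ℝ (⊤ : ℕ∞) bb)
    (hφ : IsTestFun1 φ) (β : ℝ) (μ : Measure ℝ) [IsFiniteMeasure μ] :
    ∫ x, L1op (fun y => bb y + β) φ x ∂μ = ∫ x, L1op bb φ x ∂μ + β * ∫ x, deriv φ x ∂μ := by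
  simp_rw [L1op_add_const]
  rw [integral_add ((hφ.L1op hb).integrable μ) ((hφ.deriv.integrable μ).const_mul β),
    integral_const_mul]

section Translation

variable {μ : Measure ℝ} [IsFiniteMeasure μ] {φ : ℝ → ℝ}

theorem hasDerivAt_integral_comp_sub (hφ : ContDiff ℝ 1 φ) (hs : HasCompactSupport φ) (y : ℝ) :
    HasDerivAt (fun y => ∫ x, φ (x - y) ∂μ) (-∫ x, deriv φ (x - y) ∂μ) y := by
  have hφ' := hφ.continuous_deriv le_rfl
  let D := ofCompactSupport (deriv φ) hφ' hs.deriv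
  rw [← integral_neg]
  refine (hasDerivAt_integral_of_dominated_loc_of_deriv_le (bound := fun _ => ‖D‖)
    (F' := fun a x => -deriv φ (x - a)) univ_mem
    (Eventually.of_forall fun a =>
      (hφ.continuous.comp (continuous_sub_right a)).aestronglyMeasurable)
    ((hφ.continuous.comp (continuous_sub_right y)).integrable_of_hasCompactSupport
      (hs.comp_homeomorph (Homeomorph.subRight y)))
    (hφ'.comp (continuous_sub_right y)).neg.aestronglyMeasurable
    (ae_of_all _ fun x a _ => ?_) (integrable_const _) (ae_of_all _ fun x a _ => ?_)).2
  · rw [norm_neg]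
    exact D.norm_coe_le_norm (x - a)
  · have := (hφ.differentiable one_ne_zero (x - a)).hasDerivAt.comp a
      ((hasDerivAt_id a).const_sub x)
    simpa [Function.comp_def] using this

theorem tendsto_integral_comp_sub_atTop (hφ : Continuous φ) (hs : HasCompactSupport φ) :
    Tendsto (fun y => ∫ x, φ (x - y) ∂μ) atTop (𝓝 0) := by
  let F := ofCompactSupport φ hφ hs
  have hφ0 : Tendsto φ (cocompact ℝ) (𝓝 0) := by
    have := hasCompactSupport_iff_eventuallyEq.mp hs
    rw [coclosedCompact_eq_cocompact] at this
    exact tendsto_const_nhds.congr' this.symm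
  have hsub (x : ℝ) : Tendsto (fun y => x - y) atTop (cocompact ℝ) :=
    atBot_le_cocompact.trans' (tendsto_atBot_add_const_left _ x tendsto_neg_atTop_atBot)
  simpa using tendsto_integral_filter_of_dominated_convergence (fun _ => ‖F‖)
    (Eventually.of_forall fun y => (hφ.comp (continuous_sub_right y)).aestronglyMeasurable)
    (Eventually.of_forall fun y => ae_of_all _ fun x => F.norm_coe_le_norm (x - y))
    (integrable_const _) (ae_of_all _ fun x => hφ0.comp (hsub x))

theorem integral_eq_zero_of_forall_integral_deriv_eq_zero
    (h : ∀ ψ, IsTestFun1 ψ → ∫ x, deriv ψ x ∂μ = 0) (hφ : IsTestFun1 φ) :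
    ∫ x, φ x ∂μ = 0 := by
  have hderiv (y : ℝ) : HasDerivAt (fun y => ∫ x, φ (x - y) ∂μ) 0 y := by
    have hy := h _ (hφ.comp_sub_const y)
    simp only [deriv_comp_sub_const] at hy
    simpa [hy] using hasDerivAt_integral_comp_sub (μ := μ) (hφ.1.of_le (by simp)) hφ.2 y
  have hconst (y : ℝ) : ∫ x, φ (x - y) ∂μ = ∫ x, φ x ∂μ := by
    simpa using is_const_of_deriv_eq_zero (fun y => (hderiv y).differentiableAt)
      (fun y => (hderiv y).deriv) y 0
  exact tendsto_nhds_unique tendsto_const_nhds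
    ((tendsto_integral_comp_sub_atTop hφ.continuous hφ.2).congr hconst)

end Translation

theorem exists_isTestFun1_integral_ne_zero (μ : Measure ℝ) [IsProbabilityMeasure μ] :
    ∃ φ, IsTestFun1 φ ∧ ∫ x, φ x ∂μ ≠ 0 := by
  let b (n : ℕ) : ContDiffBump (0 : ℝ) := ⟨n + 1, n + 2, by positivity, by linarith⟩
  have hb (n : ℕ) : IsTestFun1 (b n) := ⟨(b n).contDiff, (b n).hasCompactSupport⟩
  have hlim : Tendsto (fun n => ∫ x, b n x ∂μ) atTop (𝓝 (∫ _, (1 : ℝ) ∂μ)) := by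
    refine tendsto_integral_filter_of_dominated_convergence (fun _ => 1)
      (Eventually.of_forall fun n => ((hb n).integrable μ).1)
      (Eventually.of_forall fun n => ae_of_all _ fun x => ?_) (integrable_const _)
      (ae_of_all _ fun x => tendsto_const_nhds.congr' ?_)
    · rw [Real.norm_of_nonneg (b n).nonneg]
      exact (b n).le_one
    · filter_upwards [tendsto_natCast_atTop_atTop.eventually_ge_atTop |x|] with n hn
      refine ((b n).one_of_mem_closedBall ?_).symm
      rw [mem_closedBall_zero_iff, Real.norm_eq_abs]
      linarith
  simp only [integral_const, probReal_univ, smul_eq_mul, mul_one] at hlim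
  obtain ⟨n, hn⟩ := (hlim.eventually_ne one_ne_zero).exists
  exact ⟨b n, hb n, hn⟩

theorem exists_isTestFun1_integral_deriv_ne_zero (μ : Measure ℝ) [IsProbabilityMeasure μ] :
    ∃ φ, IsTestFun1 φ ∧ ∫ x, deriv φ x ∂μ ≠ 0 := by
  by_contra! h
  obtain ⟨φ, hφ, hne⟩ := exists_isTestFun1_integral_ne_zero μ
  exact hne (integral_eq_zero_of_forall_integral_deriv_eq_zero h hφ)

/-- `drift s` plays the role of `b(·, μ_s)`, already evaluated along the curve `μt`. -/
def IsWeakSolution (drift : ℝ → ℝ → ℝ) (μt : ℝ → Measure ℝ) (ν : Measure ℝ) : Prop :=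
  ∀ φ, IsTestFun1 φ → ∀ t, 0 ≤ t →
    ∫ x, φ x ∂μt t - ∫ x, φ x ∂ν = ∫ s in (0 : ℝ)..t, ∫ x, L1op (drift s) φ x ∂μt s

namespace IsWeakSolution

variable {drift : ℝ → ℝ → ℝ} {μt : ℝ → Measure ℝ} {ν : Measure ℝ} {φ : ℝ → ℝ}

/-- No measurability in time is assumed: the weak equation itself exhibits `t ↦ ∫ φ dμ_t` as a
primitive. -/
theorem aestronglyMeasurable_integral (hsol : IsWeakSolution drift μt ν) (hφ : IsTestFun1 φ) :
    AEStronglyMeasurable (fun t => ∫ x, φ x ∂μt t) (volume.restrict (Ioi 0)) := by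
  refine ((measurable_setIntegral_Ioc (fun s => ∫ x, L1op (drift s) φ x ∂μt s) 0).const_add
    (∫ x, φ x ∂ν)).aestronglyMeasurable.congr ?_
  refine (ae_restrict_iff' measurableSet_Ioi).2 (ae_of_all _ fun t (ht : 0 < t) => ?_)
  have h := hsol φ hφ t ht.le
  rw [intervalIntegral.integral_of_le ht.le] at h
  linarith

section LinearDrift

variable {β : ℝ → ℝ} (hsol : IsWeakSolution (fun s y => -y + β s) μt ν)
  (hprob : ∀ t, 0 ≤ t → IsProbabilityMeasure (μt t))
include hsol hprob

theorem integrableOn_integral_L1op (hβ : Continuous β) (hφ : IsTestFun1 φ) (T : ℝ) :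
    IntegrableOn (fun s => ∫ x, L1op (fun y => -y + β s) φ x ∂μt s) (Ioc 0 T) := by
  have hb : ContDiff ℝ (⊤ : ℕ∞) (fun y : ℝ => -y) := contDiff_id.neg
  have hψ := hφ.L1op hb
  have hsplit : ∀ s ∈ Ioc 0 T, ∫ x, L1op (fun y => -y + β s) φ x ∂μt s
      = ∫ x, L1op (fun y => -y) φ x ∂μt s + β s * ∫ x, deriv φ x ∂μt s := fun s hs =>
    have := hprob s hs.1.le
    integral_L1op_add_const hb hφ (β s) (μt s)
  refine Integrable.mono' (g := fun s => ‖hψ.toBCF‖ + |β s| * ‖hφ.deriv.toBCF‖)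
    (by fun_prop : Continuous _).integrableOn_Ioc ?_ ?_
  · refine (((hsol.aestronglyMeasurable_integral hψ).add (hβ.aestronglyMeasurable.mul
      (hsol.aestronglyMeasurable_integral hφ.deriv))).mono_measure
      (Measure.restrict_mono Ioc_subset_Ioi_self le_rfl)).congr ?_
    exact (ae_restrict_iff' measurableSet_Ioc).2 (ae_of_all _ fun s hs => (hsplit s hs).symm)
  · refine (ae_restrict_iff' measurableSet_Ioc).2 (ae_of_all _ fun s hs => ?_)
    have := hprob s hs.1.le
    rw [hsplit s hs, Real.norm_eq_abs]
    calc _ ≤ |∫ x, L1op (fun y => -y) φ x ∂μt s| + |β s| * |∫ x, deriv φ x ∂μt s| := by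
          rw [← abs_mul]; exact abs_add_le _ _
      _ ≤ _ := add_le_add (hψ.abs_integral_le _)
          (mul_le_mul_of_nonneg_left (hφ.deriv.abs_integral_le _) (abs_nonneg _))

theorem not_tendsto_drift_mul_integral_deriv_atTop (hβ : Continuous β) (hφ : IsTestFun1 φ) :
    ¬ Tendsto (fun s => β s * ∫ x, deriv φ x ∂μt s) atTop atTop := by
  intro htop
  have hb : ContDiff ℝ (⊤ : ℕ∞) (fun y : ℝ => -y) := contDiff_id.neg
  have hψ := hφ.L1op hb
  have hG : Tendsto (fun s => ∫ x, L1op (fun y => -y + β s) φ x ∂μt s) atTop atTop := by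
    refine (tendsto_atTop_add_left_of_le' _ (-‖hψ.toBCF‖)
      (f := fun s => ∫ x, L1op (fun y => -y) φ x ∂μt s) ?_ htop).congr' ?_
    · filter_upwards [eventually_ge_atTop 0] with s hs
      have := hprob s hs
      exact neg_le_of_abs_le (hψ.abs_integral_le _)
    · filter_upwards [eventually_ge_atTop 0] with s hs
      have := hprob s hs
      exact (integral_L1op_add_const hb hφ _ _).symm
  have hf := tendsto_atTop_of_sub_eq_intervalIntegral (hsol φ hφ)
    (fun T _ => hsol.integrableOn_integral_L1op hprob hβ hφ T) hG
  obtain ⟨t, ht0, ht⟩ := ((eventually_ge_atTop 0).and (hf.eventually_gt_atTop ‖hφ.toBCF‖)).exists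
  have := hprob t ht0
  exact ht.not_ge ((le_abs_self _).trans (hφ.abs_integral_le _))

end LinearDrift

theorem integral_deriv_eq_zero_of_tendsto {μ : Measure ℝ} {κ r : ℝ}
    (hsol : IsWeakSolution (fun s y => -y + κ * exp (r * s)) μt ν)
    (hprob : ∀ t, 0 ≤ t → IsProbabilityMeasure (μt t)) (hκ : κ ≠ 0) (hr : 0 < r)
    (hconv : ∀ f : ℝ →ᵇ ℝ, Tendsto (fun t => ∫ x, f x ∂μt t) atTop (𝓝 (∫ x, f x ∂μ)))
    (hφ : IsTestFun1 φ) :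
    ∫ x, deriv φ x ∂μ = 0 := by
  have hnonpos (ψ : ℝ → ℝ) (hψ : IsTestFun1 ψ) : κ * ∫ x, deriv ψ x ∂μ ≤ 0 := by
    by_contra! hpos
    refine hsol.not_tendsto_drift_mul_integral_deriv_atTop (β := fun s => κ * exp (r * s)) hprob
      (by fun_prop) hψ ?_
    have hexp : Tendsto (fun s => exp (r * s)) atTop atTop :=
      tendsto_exp_atTop.comp (tendsto_id.const_mul_atTop hr)
    refine (hexp.atTop_mul_pos hpos ((hconv hψ.deriv.toBCF).const_mul κ)).congr fun s => ?_
    simp only [IsTestFun1.coe_toBCF]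
    ring
  have hnonneg : 0 ≤ κ * ∫ x, deriv φ x ∂μ := by
    simpa [deriv.neg', integral_neg] using hnonpos (-φ) hφ.neg
  exact (mul_eq_zero.mp (le_antisymm (hnonpos φ hφ) hnonneg)).resolve_left hκ

end IsWeakSolution

theorem stmt14_no_weak_convergence_general
    (ε : ℝ) (hε : 1 < ε)
    (ν : Measure ℝ)
    (μt : ℝ → Measure ℝ)
    (hμtProb : ∀ t, 0 ≤ t → IsProbabilityMeasure (μt t))
    (hμtSol : ∀ φ : ℝ → ℝ, IsTestFun1 φ → ∀ t : ℝ, 0 ≤ t →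
      ∫ x, φ x ∂(μt t) - ∫ x, φ x ∂ν
        = ∫ s in (0:ℝ)..t,
            ∫ x, L1op (fun y => -y + ε * Bmean (μt s)) φ x ∂(μt s))
    (hBexp : ∀ t : ℝ, 0 ≤ t → Bmean (μt t) = Bmean ν * Real.exp ((ε - 1) * t))
    (hBν : Bmean ν ≠ 0) :
    ¬ ∃ muLim : Measure ℝ, IsProbabilityMeasure muLim ∧
        ∀ f : ℝ →ᵇ ℝ,
          Tendsto (fun t => ∫ x, f x ∂(μt t)) atTop (nhds (∫ x, f x ∂muLim)) := by
  rintro ⟨muLim, hmuLim, hconv⟩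
  have hsol : IsWeakSolution (fun s y => -y + ε * Bmean ν * exp ((ε - 1) * s)) μt ν := by
    intro φ hφ t ht
    rw [hμtSol φ hφ t ht]
    refine intervalIntegral.integral_congr fun s hs => ?_
    rw [uIcc_of_le ht] at hs
    simp only [hBexp s hs.1, mul_assoc]
  obtain ⟨φ, hφ, hne⟩ := exists_isTestFun1_integral_deriv_ne_zero muLim
  exact hne (hsol.integral_deriv_eq_zero_of_tendsto hμtProb
    (mul_ne_zero (by linarith) hBν) (by linarith) hconv hφ)

/-- **Non-convergence for `ε > 1`**: if the mean of the solution blows up as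
`B(ν)e^{(ε-1)t}` with `B(ν) ≠ 0`, then the solution of the mean-field
Ornstein–Uhlenbeck Cauchy problem does not converge weakly to any probability
measure (in particular, not to the standard Gaussian stationary solution). -/
theorem stmt14_no_weak_convergence
    (ε : ℝ) (hε : 1 < ε)
    (ν : Measure ℝ) (hν : IsProbabilityMeasure ν)
    (μt : ℝ → Measure ℝ)
    (hμt0 : μt 0 = ν)
    (hμtProb : ∀ t, 0 ≤ t → IsProbabilityMeasure (μt t))
    (hμtInt : ∀ t, 0 ≤ t → Integrable (fun x => x) (μt t))
    (hμtSol : ∀ φ : ℝ → ℝ, IsTestFun1 φ → ∀ t : ℝ, 0 ≤ t →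
      ∫ x, φ x ∂(μt t) - ∫ x, φ x ∂ν
        = ∫ s in (0:ℝ)..t,
            ∫ x, L1op (fun y => -y + ε * Bmean (μt s)) φ x ∂(μt s))
    (hBexp : ∀ t : ℝ, 0 ≤ t → Bmean (μt t) = Bmean ν * Real.exp ((ε - 1) * t))
    (hBν : Bmean ν ≠ 0) :
    ¬ ∃ muLim : Measure ℝ, IsProbabilityMeasure muLim ∧
        ∀ f : ℝ →ᵇ ℝ,
          Tendsto (fun t => ∫ x, f x ∂(μt t)) atTop (nhds (∫ x, f x ∂muLim)) :=
  stmt14_no_weak_convergence_general ε hε ν μt hμtProb hμtSol hBexp hBν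
end
end
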